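/- Let m, n ∈ ℕ, A ∈ A(p)^{m×n} and b ∈ A(p)^{m×1}. The following are equivalent: (1) there exists x ∈ A(p)^{n×1} such that A∗x = b; (2) there exists δ > 0 such that for all k ∈ ℕ₀ and all y ∈ ℂ^{m×1}, ‖(\hat{A}(k))* y‖₂ ≥ δ|⟨y, \hat{b}(k)⟩₂|. -/

import Mathlib

open scoped BigOperators

/-- A weight: a sequence of positive reals. -/
structure GoodWeight : Type where
  p : ℕ → ℝ
  pos : ∀ n, 0 < p n

namespace GoodWeight

/-- The growth condition `lim_{n→∞} p(n)^(1/n) = ∞`. -/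
def Grows (w : GoodWeight) : Prop :=
  Filter.Tendsto (fun n : ℕ => w.p n ^ ((n : ℝ)⁻¹)) Filter.atTop Filter.atTop

/-- The Banach algebra `A(p)`, in its sequence model: a sequence `a : ℕ → ℂ` (the
Taylor coefficients at `0` of the corresponding entire function) such that
`sup_n p(n)|a(n)| < ∞`. -/
def Ap (w : GoodWeight) : Type :=
  {a : ℕ → ℂ // ∃ C : ℝ, ∀ n, w.p n * ‖a n‖ ≤ C}

namespace Ap

variable {w : GoodWeight}

instance : Zero w.Ap :=
  ⟨⟨fun _ => 0, 0, fun n => by simp⟩⟩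

instance : Add w.Ap :=
  ⟨fun a b =>
    ⟨fun n => a.1 n + b.1 n, by
      obtain ⟨C, hC⟩ := a.2
      obtain ⟨D, hD⟩ := b.2
      refine ⟨C + D, fun n => ?_⟩
      have h1 : ‖a.1 n + b.1 n‖ ≤ ‖a.1 n‖ + ‖b.1 n‖ :=
        norm_add_le _ _
      calc w.p n * ‖a.1 n + b.1 n‖
          ≤ w.p n * ‖a.1 n‖ + w.p n * ‖b.1 n‖ := by
            rw [← mul_add]; exact mul_le_mul_of_nonneg_left h1 (w.pos n).le
        _ ≤ C + D := add_le_add (hC n) (hD n)⟩⟩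

instance : Neg w.Ap :=
  ⟨fun a =>
    ⟨fun n => -a.1 n, by
      obtain ⟨C, hC⟩ := a.2
      exact ⟨C, fun n => by simpa using hC n⟩⟩⟩

/-- The weighted Hadamard multiplication `(f ∗ g)(n) = p(n) f̂(n) ĝ(n)`. -/
instance : Mul w.Ap :=
  ⟨fun a b =>
    ⟨fun n => (w.p n : ℂ) * a.1 n * b.1 n, by
      obtain ⟨C, hC⟩ := a.2
      obtain ⟨D, hD⟩ := b.2
      refine ⟨C * D, fun n => ?_⟩
      have e : w.p n * ‖(w.p n : ℂ) * a.1 n * b.1 n‖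
          = (w.p n * ‖a.1 n‖) * (w.p n * ‖b.1 n‖) := by
        rw [norm_mul, norm_mul, Complex.norm_real, Real.norm_eq_abs, abs_of_pos (w.pos n)]; ring
      rw [e]
      have h0C : (0:ℝ) ≤ C :=
        le_trans (mul_nonneg (w.pos 0).le (norm_nonneg _)) (hC 0)
      exact mul_le_mul (hC n) (hD n) (mul_nonneg (w.pos n).le (norm_nonneg _)) h0C⟩⟩

/-- The identity element `ε`, with coefficients `1/p(n)`. -/
noncomputable instance : One w.Ap :=
  ⟨⟨fun n => ((w.p n : ℂ))⁻¹, 1, fun n => by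
      rw [norm_inv, Complex.norm_real, Real.norm_eq_abs, abs_of_pos (w.pos n),
        mul_inv_cancel₀ (w.pos n).ne']⟩⟩

instance : SMul ℂ w.Ap :=
  ⟨fun c a =>
    ⟨fun n => c * a.1 n, by
      obtain ⟨C, hC⟩ := a.2
      refine ⟨‖c‖ * C, fun n => ?_⟩
      rw [norm_mul]
      calc w.p n * (‖c‖ * ‖a.1 n‖)
          = ‖c‖ * (w.p n * ‖a.1 n‖) := by ring
        _ ≤ ‖c‖ * C := mul_le_mul_of_nonneg_left (hC n) (norm_nonneg c)⟩⟩

noncomputable instance : CommRing w.Ap where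
  add := (· + ·)
  add_assoc a b c := Subtype.ext (funext fun n => add_assoc _ _ _)
  zero := 0
  zero_add a := Subtype.ext (funext fun n => zero_add _)
  add_zero a := Subtype.ext (funext fun n => add_zero _)
  add_comm a b := Subtype.ext (funext fun n => add_comm _ _)
  nsmul := nsmulRec
  zsmul := zsmulRec
  mul := (· * ·)
  mul_assoc a b c := Subtype.ext (funext fun n => by
    show (w.p n : ℂ) * ((w.p n : ℂ) * a.1 n * b.1 n) * c.1 n
        = (w.p n : ℂ) * a.1 n * ((w.p n : ℂ) * b.1 n * c.1 n)
    ring)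
  one := 1
  one_mul a := Subtype.ext (funext fun n => by
    show (w.p n : ℂ) * ((w.p n : ℂ))⁻¹ * a.1 n = a.1 n
    have h : ((w.p n : ℝ) : ℂ) ≠ 0 := by exact_mod_cast (w.pos n).ne'
    rw [mul_inv_cancel₀ h, one_mul])
  mul_one a := Subtype.ext (funext fun n => by
    show (w.p n : ℂ) * a.1 n * ((w.p n : ℂ))⁻¹ = a.1 n
    have h : ((w.p n : ℝ) : ℂ) ≠ 0 := by exact_mod_cast (w.pos n).ne'
    field_simp)
  left_distrib a b c := Subtype.ext (funext fun n => by
    show (w.p n : ℂ) * a.1 n * (b.1 n + c.1 n)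
        = (w.p n : ℂ) * a.1 n * b.1 n + (w.p n : ℂ) * a.1 n * c.1 n
    ring)
  right_distrib a b c := Subtype.ext (funext fun n => by
    show (w.p n : ℂ) * (a.1 n + b.1 n) * c.1 n
        = (w.p n : ℂ) * a.1 n * c.1 n + (w.p n : ℂ) * b.1 n * c.1 n
    ring)
  zero_mul a := Subtype.ext (funext fun n => by
    show (w.p n : ℂ) * 0 * a.1 n = 0
    ring)
  mul_zero a := Subtype.ext (funext fun n => by
    show (w.p n : ℂ) * a.1 n * 0 = 0
    ring)
  mul_comm a b := Subtype.ext (funext fun n => by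
    show (w.p n : ℂ) * a.1 n * b.1 n = (w.p n : ℂ) * b.1 n * a.1 n
    ring)
  neg := Neg.neg
  neg_add_cancel a := Subtype.ext (funext fun n => neg_add_cancel _)

instance : Module ℂ w.Ap where
  smul := (· • ·)
  one_smul a := Subtype.ext (funext fun n => by
    show (1 : ℂ) * a.1 n = a.1 n
    ring)
  mul_smul c d a := Subtype.ext (funext fun n => by
    show (c * d) * a.1 n = c * (d * a.1 n)
    ring)
  smul_zero c := Subtype.ext (funext fun n => by
    show c * 0 = 0
    ring)
  smul_add c a b := Subtype.ext (funext fun n => by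
    show c * (a.1 n + b.1 n) = c * a.1 n + c * b.1 n
    ring)
  add_smul c d a := Subtype.ext (funext fun n => by
    show (c + d) * a.1 n = c * a.1 n + d * a.1 n
    ring)
  zero_smul a := Subtype.ext (funext fun n => by
    show (0 : ℂ) * a.1 n = 0
    ring)

noncomputable instance : Algebra ℂ w.Ap :=
  Algebra.ofModule
    (fun c a b => Subtype.ext (funext fun n => by
      show (w.p n : ℂ) * (c * a.1 n) * b.1 n = c * ((w.p n : ℂ) * a.1 n * b.1 n)
      ring))
    (fun c a b => Subtype.ext (funext fun n => by
      show (w.p n : ℂ) * a.1 n * (c * b.1 n) = c * ((w.p n : ℂ) * a.1 n * b.1 n)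
      ring))

theorem bddAbove (a : w.Ap) :
    BddAbove (Set.range fun n => w.p n * ‖a.1 n‖) := by
  obtain ⟨C, hC⟩ := a.2
  exact ⟨C, by rintro x ⟨k, rfl⟩; exact hC k⟩

/-- The norm `‖f‖ = sup_n p(n) |f̂(n)|`, as an `AddGroupNorm`. -/
noncomputable def gnorm (w : GoodWeight) : AddGroupNorm w.Ap where
  toFun a := ⨆ n, w.p n * ‖a.1 n‖
  map_zero' := by
    have h : ∀ n : ℕ, w.p n * ‖(0 : w.Ap).1 n‖ = 0 := fun n => by
      show w.p n * ‖0‖ = 0; simp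
    simp [h]
  add_le' a b := by
    apply ciSup_le
    intro n
    have h1 : ‖a.1 n + b.1 n‖ ≤ ‖a.1 n‖ + ‖b.1 n‖ :=
      norm_add_le _ _
    calc w.p n * ‖(a + b).1 n‖
        ≤ w.p n * ‖a.1 n‖ + w.p n * ‖b.1 n‖ := by
          rw [← mul_add]; exact mul_le_mul_of_nonneg_left h1 (w.pos n).le
      _ ≤ (⨆ k, w.p k * ‖a.1 k‖) + ⨆ k, w.p k * ‖b.1 k‖ :=
          add_le_add (le_ciSup (bddAbove a) n) (le_ciSup (bddAbove b) n)
  neg' a := by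
    have h : (fun n => w.p n * ‖(-a).1 n‖)
        = fun n => w.p n * ‖a.1 n‖ := by
      funext n
      show w.p n * ‖-a.1 n‖ = w.p n * ‖a.1 n‖
      rw [norm_neg]
    show (⨆ n, w.p n * ‖(-a).1 n‖) = ⨆ n, w.p n * ‖a.1 n‖
    rw [h]
  eq_zero_of_map_eq_zero' a h := by
    apply Subtype.ext
    funext n
    have h1 : w.p n * ‖a.1 n‖ ≤ 0 := h ▸ le_ciSup (bddAbove a) n
    have h2 : (0:ℝ) ≤ w.p n * ‖a.1 n‖ :=
      mul_nonneg (w.pos n).le (norm_nonneg _)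
    have h3 : ‖a.1 n‖ = 0 := by
      rcases mul_eq_zero.mp (le_antisymm h1 h2) with h' | h'
      · exact absurd h' (w.pos n).ne'
      · exact h'
    exact norm_eq_zero.mp h3

noncomputable instance : NormedAddCommGroup w.Ap :=
  (gnorm w).toNormedAddCommGroup

theorem norm_def (a : w.Ap) : ‖a‖ = ⨆ n, w.p n * ‖a.1 n‖ := rfl

theorem le_norm (a : w.Ap) (n : ℕ) : w.p n * ‖a.1 n‖ ≤ ‖a‖ :=
  le_ciSup (bddAbove a) n

theorem norm_nonneg' (a : w.Ap) : 0 ≤ ‖a‖ :=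
  le_trans (mul_nonneg (w.pos 0).le (norm_nonneg _)) (le_norm a 0)

noncomputable instance : NormedCommRing w.Ap :=
  { (inferInstance : NormedAddCommGroup w.Ap), (inferInstance : CommRing w.Ap) with
    norm_mul_le := by
      intro a b
      apply ciSup_le
      intro n
      have e : w.p n * ‖(a * b).1 n‖
          = (w.p n * ‖a.1 n‖) * (w.p n * ‖b.1 n‖) := by
        show w.p n * ‖(w.p n : ℂ) * a.1 n * b.1 n‖ = _
        rw [norm_mul, norm_mul, Complex.norm_real, Real.norm_eq_abs, abs_of_pos (w.pos n)]; ring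
      rw [e]
      exact mul_le_mul (le_norm a n) (le_norm b n)
        (mul_nonneg (w.pos n).le (norm_nonneg _)) (norm_nonneg' a) }

noncomputable instance : NormedSpace ℂ w.Ap where
  norm_smul_le c a := by
    apply ciSup_le
    intro n
    have e : w.p n * ‖(c • a).1 n‖
        = ‖c‖ * (w.p n * ‖a.1 n‖) := by
      show w.p n * ‖c * a.1 n‖ = _
      rw [norm_mul]; ring
    rw [e]
    calc ‖c‖ * (w.p n * ‖a.1 n‖)
        ≤ ‖c‖ * ‖a‖ := mul_le_mul_of_nonneg_left (le_norm a n) (norm_nonneg c)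
      _ = ‖c‖ * ‖a‖ := rfl

noncomputable instance : NormedAlgebra ℂ w.Ap :=
  { (inferInstance : Algebra ℂ w.Ap) with
    norm_smul_le := fun c a => norm_smul_le c a }

end Ap

end GoodWeight

/-! Coefficientwise, `A ∗ x = b` says `Â(k) (p(k) x̂(k)) = b̂(k)` for every `k`, and `x` lies in
`A(p)ⁿ` exactly when the vectors `p(k) x̂(k)` are bounded. So solvability means solvability of the
finite-dimensional systems `Â(k) v = b̂(k)` with `‖v‖₂ ≤ C` uniformly in `k`. By duality such a
`v` exists iff `|⟨y, b̂(k)⟩₂| ≤ C ‖Â(k)* y‖₂` for all `y`: the range of `T` is `(ker T*)ᗮ`, and the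
minimal-norm solution `v = T* y₀` of `T v = c` satisfies `‖v‖² = ⟨y₀, c⟩`. -/

open scoped InnerProductSpace Matrix

theorem EuclideanSpace.norm_le_sum_norm {𝕜 ι : Type*} [RCLike 𝕜] [Fintype ι]
    (u : EuclideanSpace 𝕜 ι) : ‖u‖ ≤ ∑ i, ‖u i‖ := by
  rw [EuclideanSpace.norm_eq]
  exact Real.sqrt_le_iff.2 ⟨by positivity,
    Finset.sum_sq_le_sq_sum_of_nonneg fun _ _ => norm_nonneg _⟩

theorem Matrix.norm_adjoint_toEuclideanLin_toLp {𝕜 ι κ : Type*} [RCLike 𝕜] [Fintype ι]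
    [DecidableEq ι] [Fintype κ] [DecidableEq κ] (M : Matrix ι κ 𝕜) (y : ι → 𝕜) :
    ‖M.toEuclideanLin.adjoint (WithLp.toLp 2 y)‖ = √(∑ j, ‖(Mᴴ *ᵥ y) j‖ ^ 2) := by
  rw [← Matrix.toEuclideanLin_conjTranspose_eq_adjoint, EuclideanSpace.norm_eq]
  rfl

namespace LinearMap

variable {𝕜 E F : Type*} [RCLike 𝕜] [NormedAddCommGroup E] [InnerProductSpace 𝕜 E]
  [FiniteDimensional 𝕜 E] [NormedAddCommGroup F] [InnerProductSpace 𝕜 F] [FiniteDimensional 𝕜 F]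
  {T : E →ₗ[𝕜] F} {c : F}

theorem norm_inner_le_norm_mul_norm_adjoint {v : E} (hv : T v = c) (y : F) :
    ‖⟪y, c⟫_𝕜‖ ≤ ‖v‖ * ‖T.adjoint y‖ := by
  rw [← hv, ← adjoint_inner_left, mul_comm]
  exact norm_inner_le_norm _ _

theorem exists_apply_eq_norm_le_inv {δ : ℝ} (hδ : 0 < δ)
    (h : ∀ y, δ * ‖⟪y, c⟫_𝕜‖ ≤ ‖T.adjoint y‖) : ∃ v, T v = c ∧ ‖v‖ ≤ δ⁻¹ := by
  have hc : c ∈ range T := by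
    rw [← Submodule.orthogonal_orthogonal (range T), orthogonal_range, Submodule.mem_orthogonal]
    intro y hy
    have hy' := h y
    rw [mem_ker.1 hy, norm_zero] at hy'
    exact norm_le_zero_iff.1 (nonpos_of_mul_nonpos_right hy' hδ)
  rw [← range_self_comp_adjoint] at hc
  obtain ⟨y, rfl⟩ := hc
  refine ⟨T.adjoint y, rfl, ?_⟩
  have hsq : δ * ‖T.adjoint y‖ ^ 2 ≤ ‖T.adjoint y‖ := by
    simpa [← adjoint_inner_left, inner_self_eq_norm_sq_to_K] using h y
  rcases (norm_nonneg (T.adjoint y)).eq_or_lt with h0 | h0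
  · rw [← h0]
    positivity
  · rw [← one_div, le_div_iff₀ hδ]
    refine le_of_mul_le_mul_right ?_ h0
    linarith [hsq]

end LinearMap

namespace GoodWeight.Ap

variable {w : GoodWeight}

def coeff (k : ℕ) : w.Ap →+ ℂ where
  toFun a := a.1 k
  map_zero' := rfl
  map_add' _ _ := rfl

@[simp]
theorem coeff_apply (k : ℕ) (a : w.Ap) : coeff k a = a.1 k := rfl

@[ext]
theorem ext {a b : w.Ap} (h : ∀ k, coeff k a = coeff k b) : a = b :=
  Subtype.ext (funext h)

theorem coeff_mul (k : ℕ) (a b : w.Ap) : coeff k (a * b) = w.p k * coeff k a * coeff k b := rfl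

theorem norm_p_mul_coeff_le_norm (a : w.Ap) (k : ℕ) : ‖(w.p k : ℂ) * coeff k a‖ ≤ ‖a‖ := by
  rw [norm_mul, Complex.norm_of_nonneg (w.pos k).le]
  exact le_norm a k

theorem coeff_mulVec {ι κ : Type*} [Fintype κ] (A : Matrix ι κ w.Ap) (x : κ → w.Ap) (k : ℕ)
    (i : ι) :
    coeff k ((A *ᵥ x) i) = (A.map (coeff k) *ᵥ fun j => (w.p k : ℂ) * coeff k (x j)) i := by
  simp only [Matrix.mulVec, dotProduct, map_sum, coeff_mul, Matrix.map_apply]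
  exact Finset.sum_congr rfl fun j _ => by ring

noncomputable def ofBounded (f : ℕ → ℂ) (C : ℝ) (hf : ∀ k, ‖f k‖ ≤ C) : w.Ap :=
  ⟨fun k => f k / w.p k, C, fun k => by
    rw [norm_div, Complex.norm_of_nonneg (w.pos k).le, mul_div_cancel₀ _ (w.pos k).ne']
    exact hf k⟩

theorem p_mul_coeff_ofBounded (f : ℕ → ℂ) (C : ℝ) (hf : ∀ k, ‖f k‖ ≤ C) (k : ℕ) :
    (w.p k : ℂ) * coeff k (ofBounded (w := w) f C hf) = f k :=
  mul_div_cancel₀ _ (Complex.ofReal_ne_zero.2 (w.pos k).ne')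

theorem exists_mulVec_eq_iff {ι κ : Type*} [Fintype κ] [DecidableEq κ] (A : Matrix ι κ w.Ap)
    (b : ι → w.Ap) :
    (∃ x, A *ᵥ x = b) ↔ ∃ C, ∀ k, ∃ v : EuclideanSpace ℂ κ,
      (A.map (coeff k)).toEuclideanLin v = WithLp.toLp 2 (fun i => coeff k (b i)) ∧ ‖v‖ ≤ C := by
  constructor
  · rintro ⟨x, rfl⟩
    refine ⟨∑ j, ‖x j‖, fun k => ⟨WithLp.toLp 2 fun j => w.p k * coeff k (x j), ?_, ?_⟩⟩
    · ext i
      exact (coeff_mulVec A x k i).symm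
    · exact (EuclideanSpace.norm_le_sum_norm _).trans
        (Finset.sum_le_sum fun j _ => norm_p_mul_coeff_le_norm (x j) k)
  · rintro ⟨C, hC⟩
    choose v hv hvC using hC
    refine ⟨fun j => ofBounded (fun k => v k j) C fun k => (PiLp.norm_apply_le _ _).trans (hvC k),
      funext fun i => ?_⟩
    ext k
    rw [coeff_mulVec]
    simp only [p_mul_coeff_ofBounded]
    exact congrArg (· i) (congrArg WithLp.ofLp (hv k))

end GoodWeight.Ap

theorem solvability_Ap_general (w : GoodWeight) (m n : ℕ)
    (A : Matrix (Fin m) (Fin n) w.Ap) (b : Fin m → w.Ap) :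
    (∃ x : Fin n → w.Ap, A.mulVec x = b) ↔
    (∃ δ : ℝ, 0 < δ ∧ ∀ (k : ℕ) (y : Fin m → ℂ),
      δ * ‖∑ i, starRingEnd ℂ (y i) * (b i).1 k‖
        ≤ Real.sqrt (∑ j,
            ‖(Matrix.of fun i j => (A i j).1 k).conjTranspose.mulVec y j‖ ^ 2)) := by
  have hinner : ∀ (k : ℕ) (y : Fin m → ℂ), ∑ i, starRingEnd ℂ (y i) * (b i).1 k
      = ⟪WithLp.toLp 2 y, WithLp.toLp 2 fun i => GoodWeight.Ap.coeff k (b i)⟫_ℂ := by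
    intro k y
    simp [EuclideanSpace.inner_toLp_toLp, dotProduct, mul_comm]
  simp only [hinner, ← Matrix.norm_adjoint_toEuclideanLin_toLp]
  rw [GoodWeight.Ap.exists_mulVec_eq_iff]
  constructor
  · rintro ⟨C, hC⟩
    refine ⟨(max C 1)⁻¹, by positivity, fun k y => ?_⟩
    obtain ⟨v, hv, hvC⟩ := hC k
    rw [inv_mul_le_iff₀ (by positivity)]
    exact (LinearMap.norm_inner_le_norm_mul_norm_adjoint hv _).trans
      (mul_le_mul_of_nonneg_right (hvC.trans (le_max_left _ _)) (norm_nonneg _))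
  · rintro ⟨δ, hδ, h⟩
    exact ⟨δ⁻¹, fun k => LinearMap.exists_apply_eq_norm_le_inv hδ fun y => h k y.ofLp⟩

/-- Solvability of `A ∗ x = b` over `A(p)`: a solution exists iff the
corona-type condition `‖(Â(k))* y‖₂ ≥ δ |⟨y, b̂(k)⟩₂|` holds uniformly in `k`. -/
theorem solvability_Ap (w : GoodWeight) (m n : ℕ) (hm : 0 < m) (hn : 0 < n)
    (hg : w.Grows) (A : Matrix (Fin m) (Fin n) w.Ap) (b : Fin m → w.Ap) :
    (∃ x : Fin n → w.Ap, A.mulVec x = b) ↔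
    (∃ δ : ℝ, 0 < δ ∧ ∀ (k : ℕ) (y : Fin m → ℂ),
      δ * ‖∑ i, starRingEnd ℂ (y i) * (b i).1 k‖
        ≤ Real.sqrt (∑ j,
            ‖(Matrix.of fun i j => (A i j).1 k).conjTranspose.mulVec y j‖ ^ 2)) :=
  solvability_Ap_general w m n A b
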